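/- The number of isomorphism classes of paramedial quasigroups admitting an affine form over the cyclic group ℤ/4 is 4, and the number of isomorphism classes of paramedial quasigroups admitting an affine form over ℤ/2 is 1. -/
import Mathlib


/-- `op` is a quasigroup operation: all left and right translations are bijective. -/
def IsQuasigroupOp {Q : Type*} (op : Q → Q → Q) : Prop :=
  (∀ a : Q, Function.Bijective fun x => op a x) ∧
  (∀ a : Q, Function.Bijective fun x => op x a)

/-- Isomorphism of binary structures: a bijection commuting with the operations. -/
def OpIso {A B : Type*} (op₁ : A → A → A) (op₂ : B → B → B) : Prop :=
  ∃ f : A ≃ B, ∀ x y, f (op₁ x y) = op₂ (f x) (f y)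

/-- The affine operation `x * y = φ(x) + ψ(y) + c` over an abelian group. -/
def affOp {G : Type*} [AddCommGroup G] (φ ψ : G ≃+ G) (c : G) : G → G → G :=
  fun x y => φ x + ψ y + c

/-- `op` is an affine form of a paramedial quasigroup over `G`:
`op = affOp φ ψ c` for automorphisms with `φ² = ψ²` (Němec–Kepka). -/
def IsAffineParamedialOp {G : Type*} [AddCommGroup G] (op : G → G → G) : Prop :=
  ∃ (φ ψ : G ≃+ G) (c : G), (∀ x, φ (φ x) = ψ (ψ x)) ∧ op = affOp φ ψ c

/-- `pqG G` is the number of isomorphism classes of paramedial quasigroups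
admitting an affine form over `G`. -/
noncomputable def pqG (G : Type*) [AddCommGroup G] : ℕ :=
  Nat.card (Quot fun o₁ o₂ : {op : G → G → G // IsAffineParamedialOp op} =>
    OpIso o₁.1 o₂.1)

-- auxiliary
lemma zmod_lin {n : ℕ} [NeZero n] (φ : ZMod n ≃+ ZMod n) (x : ZMod n) :
    φ x = φ 1 * x := by
  have h : x = x.val • (1 : ZMod n) := by
    simp [nsmul_eq_mul, ZMod.natCast_val, ZMod.cast_id]
  rw [h, map_nsmul, nsmul_eq_mul, ZMod.natCast_val, ZMod.cast_id, mul_comm]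
  simp [nsmul_eq_mul, ZMod.natCast_val, ZMod.cast_id]

lemma zmod_unit {n : ℕ} [NeZero n] (φ : ZMod n ≃+ ZMod n) :
    φ 1 * φ.symm 1 = 1 := by
  have := zmod_lin φ (φ.symm 1)
  rw [φ.apply_symm_apply] at this
  exact this.symm

lemma opIso_refl {A : Type*} (op : A → A → A) : OpIso op op :=
  ⟨Equiv.refl A, fun _ _ => rfl⟩

lemma opIso_symm {A B : Type*} {op₁ : A → A → A} {op₂ : B → B → B}
    (h : OpIso op₁ op₂) : OpIso op₂ op₁ := by
  obtain ⟨f, hf⟩ := h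
  refine ⟨f.symm, fun x y => f.injective ?_⟩
  rw [f.apply_symm_apply, hf, f.apply_symm_apply, f.apply_symm_apply]

lemma opIso_trans {A B C : Type*} {op₁ : A → A → A} {op₂ : B → B → B}
    {op₃ : C → C → C} (h : OpIso op₁ op₂) (h' : OpIso op₂ op₃) :
    OpIso op₁ op₃ := by
  obtain ⟨f, hf⟩ := h; obtain ⟨g, hg⟩ := h'
  exact ⟨f.trans g, fun x y => by simp [hf, hg]⟩

def negE (n : ℕ) : ZMod n ≃+ ZMod n where
  toFun x := -x
  invFun x := -x
  left_inv := neg_neg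
  right_inv := neg_neg
  map_add' x y := by ring

@[simp] lemma negE_apply (n : ℕ) (x : ZMod n) : negE n x = -x := rfl

abbrev S4 := {op : ZMod 4 → ZMod 4 → ZMod 4 // IsAffineParamedialOp op}

def R4 : S4 → S4 → Prop := fun o₁ o₂ => OpIso o₁.1 o₂.1

lemma R4_equiv : Equivalence R4 :=
  ⟨fun o => opIso_refl o.1, fun h => opIso_symm h, fun h h' => opIso_trans h h'⟩

def mkS4 (φ ψ : ZMod 4 ≃+ ZMod 4) (h : ∀ x, φ (φ x) = ψ (ψ x)) : S4 :=
  ⟨affOp φ ψ 0, φ, ψ, 0, h, rfl⟩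

def reps : Fin 4 → S4 :=
  ![mkS4 (AddEquiv.refl _) (AddEquiv.refl _) (fun _ => rfl),
    mkS4 (AddEquiv.refl _) (negE 4) (fun x => (neg_neg x).symm),
    mkS4 (negE 4) (AddEquiv.refl _) (fun x => neg_neg x),
    mkS4 (negE 4) (negE 4) (fun _ => rfl)]

instance {A B : Type*} [Fintype A] [Fintype B] [DecidableEq A] [DecidableEq B]
    (op₁ : A → A → A) (op₂ : B → B → B) : Decidable (OpIso op₁ op₂) :=
  inferInstanceAs (Decidable (∃ f : A ≃ B, ∀ x y, f (op₁ x y) = op₂ (f x) (f y)))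

lemma reps_key : ∀ i j : Fin 4, OpIso (reps i).1 (reps j).1 → i = j := by decide

lemma unit4 : ∀ u v : ZMod 4, u * v = 1 → u = 1 ∨ u = 3 := by decide
lemma unit2 : ∀ u v : ZMod 2, u * v = 1 → u = 1 := by decide

lemma case11 : ∀ c x y : ZMod 4, (x + y + 0) + 3*c = 1*(x + 3*c) + 1*(y + 3*c) + c := by decide
lemma case13 : ∀ c x y : ZMod 4, (x + -y + 0) + c = 1*(x + c) + 3*(y + c) + c := by decide
lemma case31 : ∀ c x y : ZMod 4, (-x + y + 0) + c = 3*(x + c) + 1*(y + c) + c := by decide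
lemma case33 : ∀ c x y : ZMod 4, (-x + -y + 0) + 3*c = 3*(x + 3*c) + 3*(y + 3*c) + c := by decide

lemma case2 : ∀ c d x y : ZMod 2, (x + y + c) + (c + d) = (x + (c + d)) + (y + (c + d)) + d := by decide

lemma quot_mk_eq_iff {a b : S4} (h : Quot.mk R4 a = Quot.mk R4 b) : R4 a b :=
  (R4_equiv.eqvGen_iff).mp (Quot.eq.mp h)

theorem pq_Z4_and_Z2 : pqG (ZMod 4) = 4 ∧ pqG (ZMod 2) = 1 := by
  constructor
  · show Nat.card (Quot R4) = 4
    have hbij : Function.Bijective (fun i => Quot.mk R4 (reps i) : Fin 4 → Quot R4) := by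
      constructor
      · intro i j h
        exact reps_key i j (quot_mk_eq_iff h)
      · intro q
        induction q using Quot.ind with
        | _ s =>
          obtain ⟨op, hop⟩ := s
          obtain ⟨φ, ψ, c, hsq, heq⟩ := hop
          have hopxy : ∀ x y, op x y = φ 1 * x + ψ 1 * y + c := by
            intro x y
            rw [heq]
            show φ x + ψ y + c = _
            rw [zmod_lin φ x, zmod_lin ψ y]
          have ha := unit4 (φ 1) (φ.symm 1) (zmod_unit φ)
          have hb := unit4 (ψ 1) (ψ.symm 1) (zmod_unit ψ)
          rcases ha with ha | ha <;> rcases hb with hb | hb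
          · refine ⟨0, Quot.sound ⟨Equiv.addRight (3*c), fun x y => ?_⟩⟩
            show ((x : ZMod 4) + y + 0) + 3*c = op (x + 3*c) (y + 3*c)
            rw [hopxy, ha, hb]; exact case11 c x y
          · refine ⟨1, Quot.sound ⟨Equiv.addRight c, fun x y => ?_⟩⟩
            show ((x : ZMod 4) + -y + 0) + c = op (x + c) (y + c)
            rw [hopxy, ha, hb]; exact case13 c x y
          · refine ⟨2, Quot.sound ⟨Equiv.addRight c, fun x y => ?_⟩⟩
            show (-(x : ZMod 4) + y + 0) + c = op (x + c) (y + c)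
            rw [hopxy, ha, hb]; exact case31 c x y
          · refine ⟨3, Quot.sound ⟨Equiv.addRight (3*c), fun x y => ?_⟩⟩
            show (-(x : ZMod 4) + -y + 0) + 3*c = op (x + 3*c) (y + 3*c)
            rw [hopxy, ha, hb]; exact case33 c x y
    have := Nat.card_eq_of_bijective _ hbij
    simp at this
    omega
  · show Nat.card (Quot fun o₁ o₂ : {op : ZMod 2 → ZMod 2 → ZMod 2 // IsAffineParamedialOp op} =>
      OpIso o₁.1 o₂.1) = 1
    rw [Nat.card_eq_one_iff_unique]
    constructor
    · refine ⟨fun q₁ q₂ => ?_⟩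
      induction q₁ using Quot.ind with
      | _ s₁ =>
        induction q₂ using Quot.ind with
        | _ s₂ =>
          obtain ⟨op₁, hop₁⟩ := s₁
          obtain ⟨op₂, hop₂⟩ := s₂
          obtain ⟨φ₁, ψ₁, c₁, h₁, he₁⟩ := hop₁
          obtain ⟨φ₂, ψ₂, c₂, h₂, he₂⟩ := hop₂
          have k₁ : ∀ x y, op₁ x y = x + y + c₁ := by
            intro x y; rw [he₁]
            show φ₁ x + ψ₁ y + c₁ = _
            rw [zmod_lin φ₁ x, zmod_lin ψ₁ y,
              unit2 (φ₁ 1) (φ₁.symm 1) (zmod_unit φ₁),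
              unit2 (ψ₁ 1) (ψ₁.symm 1) (zmod_unit ψ₁), one_mul, one_mul]
          have k₂ : ∀ x y, op₂ x y = x + y + c₂ := by
            intro x y; rw [he₂]
            show φ₂ x + ψ₂ y + c₂ = _
            rw [zmod_lin φ₂ x, zmod_lin ψ₂ y,
              unit2 (φ₂ 1) (φ₂.symm 1) (zmod_unit φ₂),
              unit2 (ψ₂ 1) (ψ₂.symm 1) (zmod_unit ψ₂), one_mul, one_mul]
          apply Quot.sound
          refine ⟨Equiv.addRight (c₁ + c₂), fun x y => ?_⟩
          show op₁ x y + (c₁ + c₂) = op₂ (x + (c₁ + c₂)) (y + (c₁ + c₂))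
          rw [k₁, k₂]; exact case2 c₁ c₂ x y
    · exact ⟨Quot.mk _ ⟨affOp (AddEquiv.refl _) (AddEquiv.refl _) 0,
        AddEquiv.refl _, AddEquiv.refl _, 0, fun _ => rfl, rfl⟩⟩
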